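/- arXiv:1206.4810 — 2 statements merged into one kernel-verified Lean document; each statement's English description precedes it below -/
import Mathlib

section
/- Let T > 0, A > 0, k > 0 and σ : [0,T] × ℝ → ℝ, and take drift b ≡ 0. Define u(t,s,q,x) = x + q·s + (2A/(e·k))·(T − t) on [0,T] × ℝ × ℤ × ℝ. Then for every (t,s,q,x): the ask functional δ ↦ A·e^{−kδ}·(u(t,s,q−1,x+s+δ) − u(t,s,q,x)) and the bid functional δ ↦ A·e^{−kδ}·(u(t,s,q+1,x−s+δ) − u(t,s,q,x)) each attain their supremum over δ ∈ ℝ at the unique point δ* = 1/k, with supremum value A/(e·k); and HJB(u)(t,s,q,x) = 0 with terminal condition u(T,s,q,x) = x + q·s. -/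
/-!
The jumps of `u` in the inventory `q` are exactly compensated by the cash change `± s`, so both
jump differences of the HJB equation equal the quote distance `δ`, and both suprema are the
maximum of `δ ↦ A e^{-kδ} δ = (A/k)·(kδ) e^{-kδ}`. Since `y e^{-y} < e^{-1}` for `y ≠ 1`
(from `y < e^{y-1}`), it is attained only at `δ = 1/k`, with value `A/(e·k)`. As `u` is affine in
`s`, the diffusion term vanishes, and `∂ₜu = -2A/(e·k)` cancels the two suprema.
-/

/-- The Hamilton–Jacobi–Bellman expression of a value function
`u : (t,s,q,x) ↦ u t s q x` for the market-making problem with intensities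
`A·e^{−kδ}` and mid-price diffusion coefficients `b`, `σ`. -/
noncomputable def HJB (A k : ℝ) (b σ : ℝ → ℝ → ℝ) (u : ℝ → ℝ → ℤ → ℝ → ℝ)
    (t s : ℝ) (q : ℤ) (x : ℝ) : ℝ :=
  deriv (fun τ => u τ s q x) t
    + b t s * deriv (fun y => u t y q x) s
    + 1 / 2 * (σ t s) ^ 2 * deriv (deriv (fun y => u t y q x)) s
    + (⨆ δ : ℝ, A * Real.exp (-(k * δ)) * (u t s (q - 1) (x + s + δ) - u t s q x))
    + (⨆ δ : ℝ, A * Real.exp (-(k * δ)) * (u t s (q + 1) (x - s + δ) - u t s q x))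

open Real

theorem Real.mul_exp_neg_lt_exp_neg_one {y : ℝ} (hy : y ≠ 1) : y * exp (-y) < exp (-1) := by
  have hlt : y < exp (y - 1) := by simpa using add_one_lt_exp (sub_ne_zero.mpr hy)
  calc y * exp (-y) < exp (y - 1) * exp (-y) := by gcongr
    _ = exp (-1) := by rw [← exp_add]; ring_nf

noncomputable def quoteGain (A k δ : ℝ) : ℝ := A * exp (-(k * δ)) * δ

section quoteGain

variable {A k : ℝ}

theorem quoteGain_eq_div_mul (hk : k ≠ 0) (δ : ℝ) :
    quoteGain A k δ = A / k * ((k * δ) * exp (-(k * δ))) := by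
  unfold quoteGain
  field_simp

theorem quoteGain_one_div (hk : k ≠ 0) : quoteGain A k (1 / k) = A / (exp 1 * k) := by
  rw [quoteGain_eq_div_mul hk, mul_one_div_cancel hk, one_mul, exp_neg]
  field_simp

theorem quoteGain_lt_of_ne (hA : 0 < A) (hk : 0 < k) {δ : ℝ} (hδ : δ ≠ 1 / k) :
    quoteGain A k δ < A / (exp 1 * k) := by
  have hkδ : k * δ ≠ 1 := fun h => hδ (by field_simp; linarith)
  calc quoteGain A k δ = A / k * ((k * δ) * exp (-(k * δ))) := quoteGain_eq_div_mul hk.ne' δ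
    _ < A / k * exp (-1) := by gcongr; exact mul_exp_neg_lt_exp_neg_one hkδ
    _ = A / (exp 1 * k) := by rw [exp_neg]; field_simp

theorem quoteGain_le (hA : 0 < A) (hk : 0 < k) (δ : ℝ) : quoteGain A k δ ≤ A / (exp 1 * k) := by
  rcases eq_or_ne δ (1 / k) with rfl | hδ
  · exact (quoteGain_one_div hk.ne').le
  · exact (quoteGain_lt_of_ne hA hk hδ).le

theorem iSup_quoteGain (hA : 0 < A) (hk : 0 < k) :
    ⨆ δ, quoteGain A k δ = A / (exp 1 * k) :=
  ciSup_eq_of_forall_le_of_forall_lt_exists_gt (quoteGain_le hA hk)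
    fun _ hw => ⟨1 / k, by rwa [quoteGain_one_div hk.ne']⟩

end quoteGain

noncomputable def affineValue (c T t s : ℝ) (q : ℤ) (x : ℝ) : ℝ := x + (q : ℝ) * s + c * (T - t)

section affineValue

variable (c T : ℝ)

theorem affineValue_ask_sub (t s : ℝ) (q : ℤ) (x δ : ℝ) :
    affineValue c T t s (q - 1) (x + s + δ) - affineValue c T t s q x = δ := by
  unfold affineValue; push_cast; ring

theorem affineValue_bid_sub (t s : ℝ) (q : ℤ) (x δ : ℝ) :
    affineValue c T t s (q + 1) (x - s + δ) - affineValue c T t s q x = δ := by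
  unfold affineValue; push_cast; ring

theorem deriv_affineValue_time (s : ℝ) (q : ℤ) (x t : ℝ) :
    deriv (fun τ => affineValue c T τ s q x) t = -c :=
  ((((hasDerivAt_id t).const_sub T).const_mul c).const_add (x + (q : ℝ) * s)).deriv.trans
    (by ring)

theorem deriv_affineValue_price (t : ℝ) (q : ℤ) (x : ℝ) :
    deriv (fun y => affineValue c T t y q x) = fun _ => (q : ℝ) :=
  funext fun y =>
    ((((hasDerivAt_id y).const_mul (q : ℝ)).const_add x).add_const (c * (T - t))).deriv.trans
      (mul_one _)

theorem HJB_affineValue (A k : ℝ) (b σ : ℝ → ℝ → ℝ) (t s : ℝ) (q : ℤ) (x : ℝ) :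
    HJB A k b σ (affineValue c T) t s q x = -c + b t s * q + 2 * ⨆ δ, quoteGain A k δ := by
  simp only [HJB, affineValue_ask_sub, affineValue_bid_sub, deriv_affineValue_time,
    deriv_affineValue_price, deriv_const]
  unfold quoteGain
  ring

end affineValue

theorem stmt_4_general (T A k : ℝ) (hA : 0 < A) (hk : 0 < k)
    (σ : ℝ → ℝ → ℝ)
    (u : ℝ → ℝ → ℤ → ℝ → ℝ)
    (hu : ∀ (t s : ℝ) (q : ℤ) (x : ℝ),
      u t s q x = x + (q : ℝ) * s + 2 * A / (Real.exp 1 * k) * (T - t)) :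
    ∀ t ∈ Set.Icc (0 : ℝ) T, ∀ (s : ℝ) (q : ℤ) (x : ℝ),
      -- the ask functional attains its supremum at the unique point `δ* = 1/k`,
      -- with supremum value `A/(e·k)`
      (A * Real.exp (-(k * (1 / k))) * (u t s (q - 1) (x + s + 1 / k) - u t s q x)
          = A / (Real.exp 1 * k)) ∧
      (∀ δ : ℝ, δ ≠ 1 / k →
        A * Real.exp (-(k * δ)) * (u t s (q - 1) (x + s + δ) - u t s q x)
          < A * Real.exp (-(k * (1 / k))) * (u t s (q - 1) (x + s + 1 / k) - u t s q x)) ∧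
      -- the bid functional attains its supremum at the unique point `δ* = 1/k`,
      -- with supremum value `A/(e·k)`
      (A * Real.exp (-(k * (1 / k))) * (u t s (q + 1) (x - s + 1 / k) - u t s q x)
          = A / (Real.exp 1 * k)) ∧
      (∀ δ : ℝ, δ ≠ 1 / k →
        A * Real.exp (-(k * δ)) * (u t s (q + 1) (x - s + δ) - u t s q x)
          < A * Real.exp (-(k * (1 / k))) * (u t s (q + 1) (x - s + 1 / k) - u t s q x)) ∧
      -- `u` solves the HJB equation (with drift `b ≡ 0`) and terminal condition
      HJB A k (fun _ _ => 0) σ u t s q x = 0 ∧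
      u T s q x = x + (q : ℝ) * s := by
  obtain rfl : u = affineValue (2 * A / (exp 1 * k)) T :=
    funext fun t => funext fun s => funext fun q => funext (hu t s q)
  intro t _ s q x
  simp only [affineValue_ask_sub, affineValue_bid_sub, ← quoteGain.eq_1, quoteGain_one_div hk.ne',
    HJB_affineValue, iSup_quoteGain hA hk]
  refine ⟨trivial, fun δ hδ => quoteGain_lt_of_ne hA hk hδ, trivial,
    fun δ hδ => quoteGain_lt_of_ne hA hk hδ, by ring, by unfold affineValue; ring⟩

/-- Martingale case of Theorem 1 (drift `b ≡ 0`): for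
`u(t,s,q,x) = x + q·s + (2A/(e·k))·(T − t)`, both the ask and bid functionals attain
their suprema at the unique point `δ* = 1/k` with value `A/(e·k)`, and `u` solves the
HJB equation with terminal condition `x + q·s`. -/
theorem stmt_4 (T A k : ℝ) (hT : 0 < T) (hA : 0 < A) (hk : 0 < k)
    (σ : ℝ → ℝ → ℝ)
    (u : ℝ → ℝ → ℤ → ℝ → ℝ)
    (hu : ∀ (t s : ℝ) (q : ℤ) (x : ℝ),
      u t s q x = x + (q : ℝ) * s + 2 * A / (Real.exp 1 * k) * (T - t)) :
    ∀ t ∈ Set.Icc (0 : ℝ) T, ∀ (s : ℝ) (q : ℤ) (x : ℝ),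
      -- the ask functional attains its supremum at the unique point `δ* = 1/k`,
      -- with supremum value `A/(e·k)`
      (A * Real.exp (-(k * (1 / k))) * (u t s (q - 1) (x + s + 1 / k) - u t s q x)
          = A / (Real.exp 1 * k)) ∧
      (∀ δ : ℝ, δ ≠ 1 / k →
        A * Real.exp (-(k * δ)) * (u t s (q - 1) (x + s + δ) - u t s q x)
          < A * Real.exp (-(k * (1 / k))) * (u t s (q - 1) (x + s + 1 / k) - u t s q x)) ∧
      -- the bid functional attains its supremum at the unique point `δ* = 1/k`,
      -- with supremum value `A/(e·k)`
      (A * Real.exp (-(k * (1 / k))) * (u t s (q + 1) (x - s + 1 / k) - u t s q x)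
          = A / (Real.exp 1 * k)) ∧
      (∀ δ : ℝ, δ ≠ 1 / k →
        A * Real.exp (-(k * δ)) * (u t s (q + 1) (x - s + δ) - u t s q x)
          < A * Real.exp (-(k * (1 / k))) * (u t s (q + 1) (x - s + 1 / k) - u t s q x)) ∧
      -- `u` solves the HJB equation (with drift `b ≡ 0`) and terminal condition
      HJB A k (fun _ _ => 0) σ u t s q x = 0 ∧
      u T s q x = x + (q : ℝ) * s :=
  stmt_4_general T A k hA hk σ u hu
end

section
/- Let T > 0, A > 0, k > 0, γ > 0, let b, σ : [0,T] → ℝ be continuous, and suppose v : [0,T] → (ℤ → ℝ) is such that each v_q is continuously differentiable and strictly positive on [0,T], satisfies v_q(T) = 1 and the (countably infinite) ODE system v_q′(t) = ((k·γ·q²/2)·σ(t)² − k·q·b(t))·v_q(t) − A·(1+γ/k)^{−1−k/γ}·(v_{q+1}(t) + v_{q−1}(t)) for every q ∈ ℤ and t ∈ [0,T]. Define u(t,s,q,x) = −exp(−γ·(x + q·s))·v_q(t)^{−γ/k} on [0,T] × ℝ × ℤ × ℝ. Then for every (t,s,q,x): (i) the ask functional δ ↦ A·e^{−kδ}·(u(t,s,q−1,x+s+δ)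 − u(t,s,q,x)) attains its supremum over δ ∈ ℝ at the unique point δ⁺* = (1/γ)·log(1+γ/k) + (1/k)·log(v_q(t)/v_{q−1}(t)), and the bid functional δ ↦ A·e^{−kδ}·(u(t,s,q+1,x−s+δ) − u(t,s,q,x)) attains its supremum at the unique point δ⁻* = (1/γ)·log(1+γ/k) − (1/k)·log(v_{q+1}(t)/v_q(t)); (ii) u satisfies the Hamilton–Jacobi–Bellman equation exactly: HJB(u)(t,s,q,x) = 0, with terminal condition u(T,s,q,x) = −exp(−γ·(x + q·s)). -/
open Real

section Quote

variable {k γ : ℝ}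

lemma one_add_div_lt_div_mul_exp_add_exp (hk : 0 < k) (hγ : 0 < γ) {d : ℝ} (hd : d ≠ 0) :
    1 + γ / k < γ / k * exp (k * d) + exp (-(γ * d)) := by
  have h₁ := add_one_lt_exp (mul_ne_zero hk.ne' hd)
  have h₂ := add_one_lt_exp (neg_ne_zero.mpr (mul_ne_zero hγ.ne' hd))
  have hγk : 0 < γ / k := div_pos hγ hk
  have hscale : γ / k * (k * d) = γ * d := by field_simp
  nlinarith

/-- `hc` is the first-order condition at `δ₀`; after shifting by `δ₀` the claim is the tangent-line
bound above. -/
lemma exp_mul_sub_lt_of_ne (hk : 0 < k) (hγ : 0 < γ) {a c δ₀ δ : ℝ} (ha : 0 < a)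
    (hc : c * exp (-(γ * δ₀)) = a / (1 + γ / k)) (hδ : δ ≠ δ₀) :
    exp (-(k * δ)) * (a - c * exp (-(γ * δ)))
      < exp (-(k * δ₀)) * (a - c * exp (-(γ * δ₀))) := by
  obtain ⟨d, rfl⟩ : ∃ d, δ = δ₀ + d := ⟨δ - δ₀, by ring⟩
  have hd : d ≠ 0 := by rintro rfl; simp at hδ
  have h1 : 0 < 1 + γ / k := by positivity
  have key := one_add_div_lt_div_mul_exp_add_exp hk hγ hd
  calc exp (-(k * (δ₀ + d))) * (a - c * exp (-(γ * (δ₀ + d))))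
      = exp (-(k * δ₀)) * (a / (1 + γ / k)) * (exp (-(k * d)) * (1 + γ / k - exp (-(γ * d)))) := by
        rw [show -(k * (δ₀ + d)) = -(k * δ₀) + -(k * d) by ring,
          show -(γ * (δ₀ + d)) = -(γ * δ₀) + -(γ * d) by ring, exp_add, exp_add, ← mul_assoc c, hc]
        field_simp
    _ < exp (-(k * δ₀)) * (a / (1 + γ / k)) * (γ / k) := by
        gcongr
        calc exp (-(k * d)) * (1 + γ / k - exp (-(γ * d)))
            < exp (-(k * d)) * (γ / k * exp (k * d)) := by gcongr; linarith
          _ = γ / k := by rw [mul_left_comm, ← exp_add, neg_add_cancel, exp_zero, mul_one]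
    _ = exp (-(k * δ₀)) * (a - c * exp (-(γ * δ₀))) := by
        rw [hc]
        field_simp
        ring

end Quote

section OptimalQuote

variable {k γ V W : ℝ}

/-- The optimal quote of a trade moving the inventory from `q` to `q'`, with `V = v_q(t)` and
`W = v_{q'}(t)`. -/
noncomputable def optimalQuote (k γ V W : ℝ) : ℝ := 1 / γ * log (1 + γ / k) + 1 / k * log (V / W)

lemma exp_neg_mul_optimalQuote (hk : 0 < k) (hγ : 0 < γ) (hV : 0 < V) (hW : 0 < W) :
    exp (-(k * optimalQuote k γ V W)) = (1 + γ / k) ^ (-(k / γ)) * (W / V) := by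
  have h1 : 0 < 1 + γ / k := by positivity
  rw [rpow_def_of_pos h1, ← exp_log (div_pos hW hV), ← exp_add, optimalQuote,
    log_div hV.ne' hW.ne', log_div hW.ne' hV.ne']
  congr 1
  field_simp
  ring

lemma rpow_mul_exp_neg_mul_optimalQuote (hk : 0 < k) (hγ : 0 < γ) (hV : 0 < V) (hW : 0 < W) :
    W ^ (-(γ / k)) * exp (-(γ * optimalQuote k γ V W)) = V ^ (-(γ / k)) / (1 + γ / k) := by
  have h1 : 0 < 1 + γ / k := by positivity
  have : exp (-(γ * optimalQuote k γ V W)) = (V / W) ^ (-(γ / k)) / (1 + γ / k) := by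
    rw [rpow_def_of_pos (div_pos hV hW), ← exp_log h1, ← exp_sub, optimalQuote]
    congr 1
    field_simp
    ring
  rw [this, div_rpow hV.le hW.le, mul_div_assoc', mul_div_cancel₀ _ (rpow_pos_of_pos hW _).ne']

lemma optimalQuote_eq_sub :
    optimalQuote k γ V W = 1 / γ * log (1 + γ / k) - 1 / k * log (W / V) := by
  rw [optimalQuote, ← inv_div W V, log_inv]
  ring

end OptimalQuote

lemma ciSup_eq_of_forall_ne_lt {ι α : Type*} [ConditionallyCompleteLinearOrder α] {f : ι → α}
    {i₀ : ι} (h : ∀ i, i ≠ i₀ → f i < f i₀) : ⨆ i, f i = f i₀ := by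
  have : Nonempty ι := ⟨i₀⟩
  refine IsLUB.ciSup_eq (IsGreatest.isLUB ⟨⟨i₀, rfl⟩, ?_⟩)
  rintro _ ⟨i, rfl⟩
  rcases eq_or_ne i i₀ with rfl | hi
  exacts [le_rfl, (h i hi).le]

noncomputable def ansatz (γ k : ℝ) (v : ℝ → ℤ → ℝ) (t s : ℝ) (q : ℤ) (x : ℝ) : ℝ :=
  -exp (-(γ * (x + q * s))) * v t q ^ (-(γ / k))

section Ansatz

variable {A k γ : ℝ} {v : ℝ → ℤ → ℝ} {t s x y : ℝ} {q q' : ℤ}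

lemma ansatz_sub_ansatz (h : y + q' * s = x + q * s) (δ : ℝ) :
    ansatz γ k v t s q' (y + δ) - ansatz γ k v t s q x
      = exp (-(γ * (x + q * s))) * (v t q ^ (-(γ / k)) - v t q' ^ (-(γ / k)) * exp (-(γ * δ))) := by
  rw [ansatz, ansatz, show -(γ * (y + δ + q' * s)) = -(γ * (x + q * s)) + -(γ * δ) by
    rw [add_right_comm, h]; ring, exp_add]
  ring

/-- A trade taking the inventory from `q` to `q'` at quote `δ` changes the cash `y` so that
the marked-to-market wealth `y + q' s` goes up by `δ`. -/
lemma tradeGain_lt_tradeGain_optimalQuote (hA : 0 < A) (hk : 0 < k) (hγ : 0 < γ)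
    (hV : 0 < v t q) (hW : 0 < v t q') (h : y + q' * s = x + q * s) {δ : ℝ}
    (hδ : δ ≠ optimalQuote k γ (v t q) (v t q')) :
    A * exp (-(k * δ)) * (ansatz γ k v t s q' (y + δ) - ansatz γ k v t s q x)
      < A * exp (-(k * optimalQuote k γ (v t q) (v t q')))
        * (ansatz γ k v t s q' (y + optimalQuote k γ (v t q) (v t q')) - ansatz γ k v t s q x) := by
  have hmax := exp_mul_sub_lt_of_ne hk hγ (rpow_pos_of_pos hV _)
    (rpow_mul_exp_neg_mul_optimalQuote hk hγ hV hW) hδ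
  have hAC : 0 < A * exp (-(γ * (x + q * s))) := by positivity
  rw [ansatz_sub_ansatz h, ansatz_sub_ansatz h]
  linarith [mul_lt_mul_of_pos_left hmax hAC]

lemma iSup_tradeGain (hA : 0 < A) (hk : 0 < k) (hγ : 0 < γ)
    (hV : 0 < v t q) (hW : 0 < v t q') (h : y + q' * s = x + q * s) :
    ⨆ δ, A * exp (-(k * δ)) * (ansatz γ k v t s q' (y + δ) - ansatz γ k v t s q x)
      = -(γ / k) * A * (1 + γ / k) ^ (-1 - k / γ) * (v t q' / v t q)
        * ansatz γ k v t s q x := by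
  have h1 : 0 < 1 + γ / k := by positivity
  rw [ciSup_eq_of_forall_ne_lt fun δ hδ =>
      tradeGain_lt_tradeGain_optimalQuote (δ := δ) hA hk hγ hV hW h hδ,
    ansatz_sub_ansatz h, rpow_mul_exp_neg_mul_optimalQuote hk hγ hV hW,
    exp_neg_mul_optimalQuote hk hγ hV hW, show -1 - k / γ = -(k / γ) - 1 by ring,
    rpow_sub_one h1.ne', ansatz]
  field_simp
  ring

lemma hasDerivAt_ansatz_time {v' : ℝ} (hv : HasDerivAt (fun τ => v τ q) v' t) (hV : 0 < v t q) :
    HasDerivAt (fun τ => ansatz γ k v τ s q x) (-(γ / k) * (v' / v t q) * ansatz γ k v t s q x) t := by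
  refine ((hv.rpow_const (p := -(γ / k)) (Or.inl hV.ne')).const_mul
    (-exp (-(γ * (x + q * s))))).congr_deriv ?_
  rw [ansatz, rpow_sub_one hV.ne']
  field_simp

lemma hasDerivAt_ansatz_space :
    HasDerivAt (fun y => ansatz γ k v t y q x) (-(γ * q) * ansatz γ k v t s q x) s := by
  have hlin : HasDerivAt (fun y => -(γ * (x + q * y))) (-(γ * q)) s :=
    (((hasDerivAt_id s).const_mul (q : ℝ)).const_add x).const_mul γ |>.fun_neg |>.congr_deriv
      (by ring)
  refine (hlin.exp.fun_neg.mul_const (v t q ^ (-(γ / k)))).congr_deriv ?_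
  rw [ansatz]
  ring

lemma deriv_ansatz_space :
    deriv (fun y => ansatz γ k v t y q x) = fun y => -(γ * q) * ansatz γ k v t y q x :=
  funext fun _ => hasDerivAt_ansatz_space.deriv

lemma HJB_ansatz_eq_zero (hA : 0 < A) (hk : 0 < k) (hγ : 0 < γ) (b σ : ℝ → ℝ)
    (hv : DifferentiableAt ℝ (fun τ => v τ q) t)
    (hV : 0 < v t q) (hVask : 0 < v t (q - 1)) (hVbid : 0 < v t (q + 1))
    (hode : deriv (fun τ => v τ q) t
      = (k * γ * (q : ℝ) ^ 2 / 2 * (σ t) ^ 2 - k * (q : ℝ) * b t) * v t q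
        - A * (1 + γ / k) ^ (-(1 : ℝ) - k / γ) * (v t (q + 1) + v t (q - 1))) :
    HJB A k (fun t _ => b t) (fun t _ => σ t) (ansatz γ k v) t s q x = 0 := by
  have hask : x + s + ((q - 1 : ℤ) : ℝ) * s = x + q * s := by push_cast; ring
  have hbid : x - s + ((q + 1 : ℤ) : ℝ) * s = x + q * s := by push_cast; ring
  rw [HJB, (hasDerivAt_ansatz_time hv.hasDerivAt hV).deriv, deriv_ansatz_space,
    (hasDerivAt_ansatz_space.const_mul _).deriv, iSup_tradeGain hA hk hγ hV hVask hask,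
    iSup_tradeGain hA hk hγ hV hVbid hbid, hode]
  field_simp
  ring

end Ansatz

theorem stmt_13_general (T A k γ : ℝ) (hA : 0 < A) (hk : 0 < k) (hγ : 0 < γ)
    (b σ : ℝ → ℝ)
    (v : ℝ → ℤ → ℝ)
    (hv_smooth : ∀ q : ℤ, ContDiff ℝ 1 fun τ => v τ q)
    (hv_pos : ∀ q : ℤ, ∀ t ∈ Set.Icc (0 : ℝ) T, 0 < v t q)
    (hv_T : ∀ q : ℤ, v T q = 1)
    (hv_ode : ∀ q : ℤ, ∀ t ∈ Set.Icc (0 : ℝ) T,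
      deriv (fun τ => v τ q) t
        = (k * γ * (q : ℝ) ^ 2 / 2 * (σ t) ^ 2 - k * (q : ℝ) * b t) * v t q
          - A * (1 + γ / k) ^ (-(1 : ℝ) - k / γ) * (v t (q + 1) + v t (q - 1)))
    (u : ℝ → ℝ → ℤ → ℝ → ℝ)
    (hu : ∀ (t s : ℝ) (q : ℤ) (x : ℝ),
      u t s q x = -Real.exp (-(γ * (x + (q : ℝ) * s))) * (v t q) ^ (-(γ / k))) :
    ∀ t ∈ Set.Icc (0 : ℝ) T, ∀ (s : ℝ) (q : ℤ) (x : ℝ),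
      ∀ δp δm : ℝ,
        δp = 1 / γ * Real.log (1 + γ / k) + 1 / k * Real.log (v t q / v t (q - 1)) →
        δm = 1 / γ * Real.log (1 + γ / k) - 1 / k * Real.log (v t (q + 1) / v t q) →
          -- (i) the ask functional attains its supremum at the unique point `δ⁺*`
          (∀ δ : ℝ, δ ≠ δp →
            A * Real.exp (-(k * δ)) * (u t s (q - 1) (x + s + δ) - u t s q x)
              < A * Real.exp (-(k * δp)) * (u t s (q - 1) (x + s + δp) - u t s q x)) ∧
          -- and the bid functional at the unique point `δ⁻*`
          (∀ δ : ℝ, δ ≠ δm →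
            A * Real.exp (-(k * δ)) * (u t s (q + 1) (x - s + δ) - u t s q x)
              < A * Real.exp (-(k * δm)) * (u t s (q + 1) (x - s + δm) - u t s q x)) ∧
          -- (ii) `u` solves the HJB equation exactly, with the exponential terminal datum
          HJB A k (fun t _ => b t) (fun t _ => σ t) u t s q x = 0 ∧
          u T s q x = -Real.exp (-(γ * (x + (q : ℝ) * s))) := by
  intro t ht s q x δp δm hδp hδm
  obtain rfl : u = ansatz γ k v := by funext t s q x; exact hu t s q x
  rw [← optimalQuote_eq_sub] at hδm
  subst hδp hδm
  have hask : x + s + ((q - 1 : ℤ) : ℝ) * s = x + q * s := by push_cast; ring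
  have hbid : x - s + ((q + 1 : ℤ) : ℝ) * s = x + q * s := by push_cast; ring
  have hV := hv_pos q t ht
  have hVask := hv_pos (q - 1) t ht
  have hVbid := hv_pos (q + 1) t ht
  refine ⟨fun δ hδ => tradeGain_lt_tradeGain_optimalQuote hA hk hγ hV hVask hask hδ,
    fun δ hδ => tradeGain_lt_tradeGain_optimalQuote hA hk hγ hV hVbid hbid hδ,
    HJB_ansatz_eq_zero hA hk hγ b σ ((hv_smooth q).differentiable one_ne_zero t) hV hVask hVbid
      (hv_ode q t ht), ?_⟩
  rw [ansatz, hv_T, one_rpow, mul_one]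

/-- Guéant–Lehalle–Fernandez-Tapia-type exact solution, extended to arithmetic
Brownian mid-price `dS = b(t)dt + σ(t)dW`: if the positive family `(v_q)_{q∈ℤ}`
solves the stated countably infinite linear ODE system with `v_q(T) = 1`, then
`u(t,s,q,x) = −exp(−γ(x+qs))·v_q(t)^{−γ/k}` solves the HJB equation exactly, and
the ask/bid functionals attain their suprema at the unique points
`δ⁺* = (1/γ)log(1+γ/k) + (1/k)log(v_q/v_{q−1})` and
`δ⁻* = (1/γ)log(1+γ/k) − (1/k)log(v_{q+1}/v_q)`. -/
theorem stmt_13 (T A k γ : ℝ) (hT : 0 < T) (hA : 0 < A) (hk : 0 < k) (hγ : 0 < γ)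
    (b σ : ℝ → ℝ) (hb : ContinuousOn b (Set.Icc 0 T)) (hσ : ContinuousOn σ (Set.Icc 0 T))
    (v : ℝ → ℤ → ℝ)
    (hv_smooth : ∀ q : ℤ, ContDiff ℝ 1 fun τ => v τ q)
    (hv_pos : ∀ q : ℤ, ∀ t ∈ Set.Icc (0 : ℝ) T, 0 < v t q)
    (hv_T : ∀ q : ℤ, v T q = 1)
    (hv_ode : ∀ q : ℤ, ∀ t ∈ Set.Icc (0 : ℝ) T,
      deriv (fun τ => v τ q) t
        = (k * γ * (q : ℝ) ^ 2 / 2 * (σ t) ^ 2 - k * (q : ℝ) * b t) * v t q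
          - A * (1 + γ / k) ^ (-(1 : ℝ) - k / γ) * (v t (q + 1) + v t (q - 1)))
    (u : ℝ → ℝ → ℤ → ℝ → ℝ)
    (hu : ∀ (t s : ℝ) (q : ℤ) (x : ℝ),
      u t s q x = -Real.exp (-(γ * (x + (q : ℝ) * s))) * (v t q) ^ (-(γ / k))) :
    ∀ t ∈ Set.Icc (0 : ℝ) T, ∀ (s : ℝ) (q : ℤ) (x : ℝ),
      ∀ δp δm : ℝ,
        δp = 1 / γ * Real.log (1 + γ / k) + 1 / k * Real.log (v t q / v t (q - 1)) →
        δm = 1 / γ * Real.log (1 + γ / k) - 1 / k * Real.log (v t (q + 1) / v t q) →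
          -- (i) the ask functional attains its supremum at the unique point `δ⁺*`
          (∀ δ : ℝ, δ ≠ δp →
            A * Real.exp (-(k * δ)) * (u t s (q - 1) (x + s + δ) - u t s q x)
              < A * Real.exp (-(k * δp)) * (u t s (q - 1) (x + s + δp) - u t s q x)) ∧
          -- and the bid functional at the unique point `δ⁻*`
          (∀ δ : ℝ, δ ≠ δm →
            A * Real.exp (-(k * δ)) * (u t s (q + 1) (x - s + δ) - u t s q x)
              < A * Real.exp (-(k * δm)) * (u t s (q + 1) (x - s + δm) - u t s q x)) ∧
          -- (ii) `u` solves the HJB equation exactly, with the exponential terminal datum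
          HJB A k (fun t _ => b t) (fun t _ => σ t) u t s q x = 0 ∧
          u T s q x = -Real.exp (-(γ * (x + (q : ℝ) * s))) :=
  stmt_13_general T A k γ hA hk hγ b σ v hv_smooth hv_pos hv_T hv_ode u hu
end
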